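/- arXiv:math/9709213 — 4 statements merged into one kernel-verified Lean document; each statement's English description precedes it below -/
import Mathlib

section
/- Let [T_1,…,T_n] be a C_0-contraction and Δ = (I − Σ_{i=1}^n T_i T_i*)^{1/2}. Then Σ_{α∈F_n^+} T_α Δ² T_α* = I (convergence in the strong operator topology), where the sum is over all words in the free semigroup on n generators. -/
/-- The operator `T_α` associated to a word `α`. -/
noncomputable def wordOp {n : ℕ} {H : Type} [NormedAddCommGroup H]
    [InnerProductSpace ℂ H] (T : Fin n → H →L[ℂ] H) (w : List (Fin n)) :
    H →L[ℂ] H :=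
  (w.map T).prod

lemma wordOp_append {n : ℕ} {H : Type} [NormedAddCommGroup H]
    [InnerProductSpace ℂ H] (T : Fin n → H →L[ℂ] H) (w v : List (Fin n)) :
    wordOp T (w ++ v) = wordOp T w * wordOp T v := by
  simp [wordOp]

lemma wordOp_snoc {n : ℕ} {H : Type} [NormedAddCommGroup H]
    [InnerProductSpace ℂ H] (T : Fin n → H →L[ℂ] H) {k : ℕ}
    (f : Fin k → Fin n) (i : Fin n) :
    wordOp T (List.ofFn (Fin.snoc f i)) = wordOp T (List.ofFn f) * T i := by
  rw [List.ofFn_succ']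
  simp only [Fin.snoc_castSucc, Fin.snoc_last, List.concat_eq_append,
    wordOp_append]
  simp [wordOp]

/-- The finset of all words of length `< k`. -/
noncomputable def wordsLt (n k : ℕ) : Finset (List (Fin n)) :=
  (Finset.range k).biUnion fun j =>
    Finset.image (fun f : Fin j → Fin n => List.ofFn f) Finset.univ

lemma mem_wordsLt {n k : ℕ} {w : List (Fin n)} :
    w ∈ wordsLt n k ↔ w.length < k := by
  simp only [wordsLt, Finset.mem_biUnion, Finset.mem_range, Finset.mem_image,
    Finset.mem_univ, true_and]
  constructor
  · rintro ⟨j, hj, f, rfl⟩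
    simpa using hj
  · intro hw
    exact ⟨w.length, hw, w.get, List.ofFn_get w⟩

lemma sum_wordsLt {n : ℕ} {M : Type*} [AddCommMonoid M]
    (F : List (Fin n) → M) (k : ℕ) :
    ∑ w ∈ wordsLt n k, F w
      = ∑ j ∈ Finset.range k, ∑ f : Fin j → Fin n, F (List.ofFn f) := by
  classical
  rw [wordsLt, Finset.sum_biUnion]
  · refine Finset.sum_congr rfl fun j _ => ?_
    rw [Finset.sum_image]
    intro f _ g _ hfg
    exact List.ofFn_injective hfg
  · intro a _ b _ hab
    refine Finset.disjoint_left.mpr fun w hwa hwb => hab ?_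
    simp only [Finset.coe_image, Set.mem_image, Finset.mem_coe,
      Finset.mem_image] at hwa hwb
    obtain ⟨f, _, rfl⟩ := hwa
    obtain ⟨g, _, hg⟩ := hwb
    have := congrArg List.length hg
    simpa using this.symm

set_option maxHeartbeats 2000000 in
/-- For a `C₀`-contraction `[T₁,…,Tₙ]` with defect operator
`Δ = (I − ∑ Tᵢ Tᵢ*)^{1/2}`, one has `∑_{α ∈ F_n⁺} T_α Δ² T_α* = I` in the
strong operator topology (as an unconditional sum over all words). -/
theorem C0_defect_sum_eq_id
    (n : ℕ) {H : Type} [NormedAddCommGroup H] [InnerProductSpace ℂ H]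
    [CompleteSpace H] (T : Fin n → H →L[ℂ] H)
    (hrow : ((1 : H →L[ℂ] H) -
        ∑ i, T i * ContinuousLinearMap.adjoint (T i)).IsPositive)
    (hC0 : ∀ h : H,
      Filter.Tendsto
        (fun k : ℕ =>
          (∑ f : Fin k → Fin n,
            wordOp T (List.ofFn f) *
              ContinuousLinearMap.adjoint (wordOp T (List.ofFn f))) h)
        Filter.atTop (nhds 0))
    (Δ : H →L[ℂ] H) (hΔsa : IsSelfAdjoint Δ) (hΔpos : Δ.IsPositive)
    (hΔ2 : Δ * Δ =
      (1 : H →L[ℂ] H) - ∑ i, T i * ContinuousLinearMap.adjoint (T i)) :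
    ∀ h : H,
      HasSum
        (fun w : List (Fin n) =>
          (wordOp T w * (Δ * Δ) *
            ContinuousLinearMap.adjoint (wordOp T w)) h)
        h := by
  classical
  intro h
  set Q : ℕ → H →L[ℂ] H := fun k => ∑ f : Fin k → Fin n,
      wordOp T (List.ofFn f) *
        ContinuousLinearMap.adjoint (wordOp T (List.ofFn f)) with hQ
  set Op : List (Fin n) → H →L[ℂ] H := fun w =>
      wordOp T w * (Δ * Δ) * ContinuousLinearMap.adjoint (wordOp T w) with hOp
  -- the adjoint of Δ is itself
  have hΔadj : ContinuousLinearMap.adjoint Δ = Δ := by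
    rw [← ContinuousLinearMap.star_eq_adjoint]; exact hΔsa
  have hΔinner : ∀ a b : H, (inner ℂ (Δ a) b : ℂ) = inner ℂ a (Δ b) := by
    intro a b
    conv_lhs => rw [← hΔadj]
    exact ContinuousLinearMap.adjoint_inner_left Δ b a
  -- Q 0 = 1
  have hQ0 : Q 0 = 1 := by
    simp only [hQ]
    rw [Fintype.sum_unique]
    simp [wordOp, ← ContinuousLinearMap.star_eq_adjoint]
  -- telescoping step
  have hQsucc : ∀ k : ℕ, Q (k + 1)
      = ∑ f : Fin k → Fin n, ∑ i : Fin n,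
          wordOp T (List.ofFn (Fin.snoc f i)) *
            ContinuousLinearMap.adjoint (wordOp T (List.ofFn (Fin.snoc f i))) := by
    intro k
    simp only [hQ]
    rw [← Equiv.sum_comp (Fin.snocEquiv (fun _ => Fin n))
      (fun g => wordOp T (List.ofFn g) *
        ContinuousLinearMap.adjoint (wordOp T (List.ofFn g)))]
    rw [Fintype.sum_prod_type]
    rw [Finset.sum_comm]
    rfl
  have hstep : ∀ k : ℕ,
      (∑ f : Fin k → Fin n, Op (List.ofFn f)) = Q k - Q (k + 1) := by
    intro k
    have key : ∀ f : Fin k → Fin n, Op (List.ofFn f)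
        = wordOp T (List.ofFn f) *
            ContinuousLinearMap.adjoint (wordOp T (List.ofFn f))
          - ∑ i : Fin n, wordOp T (List.ofFn (Fin.snoc f i)) *
              ContinuousLinearMap.adjoint (wordOp T (List.ofFn (Fin.snoc f i))) := by
      intro f
      rw [hOp]
      simp only [hΔ2]
      simp only [wordOp_snoc]
      rw [mul_sub, sub_mul, mul_one, Finset.mul_sum, Finset.sum_mul]
      congr 1
      refine Finset.sum_congr rfl fun i _ => ?_
      simp only [← ContinuousLinearMap.star_eq_adjoint, star_mul]
      noncomm_ring
    rw [Finset.sum_congr rfl fun f _ => key f, Finset.sum_sub_distrib,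
      hQsucc k]
  have htel : ∀ k : ℕ,
      ∑ j ∈ Finset.range k, ∑ f : Fin j → Fin n, Op (List.ofFn f)
        = 1 - Q k := by
    intro k
    induction k with
    | zero => simp [hQ0]
    | succ k ih => rw [Finset.sum_range_succ, ih, hstep]; abel
  -- inner ℂ product computation
  have inner_Op : ∀ (w : List (Fin n)) (x y : H),
      (inner ℂ ((Op w) x) y : ℂ)
        = inner ℂ (Δ ((ContinuousLinearMap.adjoint (wordOp T w)) x))
            (Δ ((ContinuousLinearMap.adjoint (wordOp T w)) y)) := by
    intro w x y
    have h1 : (Op w) x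
        = (wordOp T w) (Δ (Δ ((ContinuousLinearMap.adjoint (wordOp T w)) x))) := rfl
    rw [h1, ← ContinuousLinearMap.adjoint_inner_right (wordOp T w), hΔinner]
  -- scalar quantities
  set u : List (Fin n) → H → ℝ := fun w x =>
      ‖Δ ((ContinuousLinearMap.adjoint (wordOp T w)) x)‖ ^ 2 with hu
  have re_inner_Op_self : ∀ (w : List (Fin n)) (x : H),
      (inner ℂ ((Op w) x) x : ℂ).re = u w x := by
    intro w x
    rw [inner_Op]
    have := inner_self_eq_norm_sq (𝕜 := ℂ)
      (Δ ((ContinuousLinearMap.adjoint (wordOp T w)) x))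
    simpa [RCLike.re_to_complex] using this
  have u_nonneg : ∀ w x, 0 ≤ u w x := fun w x => sq_nonneg _
  -- partial sums of u are bounded by ‖x‖²
  have sum_wordsLt_eq : ∀ (k : ℕ) (x : H),
      ∑ w ∈ wordsLt n k, (Op w) x = x - Q k x := by
    intro k x
    have h1 : ∑ w ∈ wordsLt n k, (Op w) x
        = (∑ w ∈ wordsLt n k, Op w) x := by
      rw [ContinuousLinearMap.sum_apply]
    rw [h1, sum_wordsLt Op k, htel k]
    simp
  have sum_u_wordsLt : ∀ (k : ℕ) (x : H),
      ∑ w ∈ wordsLt n k, u w x = (inner ℂ (x - Q k x) x : ℂ).re := by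
    intro k x
    rw [← sum_wordsLt_eq k x, sum_inner, Complex.re_sum]
    exact Finset.sum_congr rfl fun w _ => (re_inner_Op_self w x).symm
  have Qk_nonneg : ∀ (k : ℕ) (x : H), 0 ≤ (inner ℂ (Q k x) x : ℂ).re := by
    intro k x
    have h1 : Q k x = ∑ f : Fin k → Fin n,
        (wordOp T (List.ofFn f) *
          ContinuousLinearMap.adjoint (wordOp T (List.ofFn f))) x := by
      rw [hQ, ContinuousLinearMap.sum_apply]
    rw [h1, sum_inner, Complex.re_sum]
    refine Finset.sum_nonneg fun f _ => ?_
    have h2 : ((wordOp T (List.ofFn f) *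
        ContinuousLinearMap.adjoint (wordOp T (List.ofFn f))) x)
        = (wordOp T (List.ofFn f))
            ((ContinuousLinearMap.adjoint (wordOp T (List.ofFn f))) x) := rfl
    rw [h2, ← ContinuousLinearMap.adjoint_inner_right (wordOp T (List.ofFn f))]
    have := inner_self_eq_norm_sq (𝕜 := ℂ)
      ((ContinuousLinearMap.adjoint (wordOp T (List.ofFn f))) x)
    simp only [RCLike.re_to_complex] at this
    rw [this]
    positivity
  have sum_u_le : ∀ (x : H) (s : Finset (List (Fin n))),
      ∑ w ∈ s, u w x ≤ ‖x‖ ^ 2 := by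
    intro x s
    set k : ℕ := (s.sup fun w => w.length) + 1 with hk
    have hsub : s ⊆ wordsLt n k := fun w hw =>
      mem_wordsLt.mpr (Nat.lt_succ_of_le (Finset.le_sup hw))
    calc ∑ w ∈ s, u w x ≤ ∑ w ∈ wordsLt n k, u w x :=
          Finset.sum_le_sum_of_subset_of_nonneg hsub
            fun w _ _ => u_nonneg w x
      _ = (inner ℂ (x - Q k x) x : ℂ).re := sum_u_wordsLt k x
      _ = (inner ℂ x x : ℂ).re - (inner ℂ (Q k x) x : ℂ).re := by
          rw [inner_sub_left]; simp
      _ ≤ (inner ℂ x x : ℂ).re := by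
          have := Qk_nonneg k x; linarith
      _ = ‖x‖ ^ 2 := by
          have := inner_self_eq_norm_sq (𝕜 := ℂ) x
          simpa [RCLike.re_to_complex] using this
  -- summability of u
  have hu_summable : Summable (fun w => u w h) :=
    summable_of_sum_le (fun w => u_nonneg w h) (sum_u_le h)
  -- Cauchy–Schwarz bound for partial vector sums
  have norm_sum_le : ∀ s : Finset (List (Fin n)),
      ‖∑ w ∈ s, (Op w) h‖ ^ 2 ≤ ∑ w ∈ s, u w h := by
    intro s
    set g : H := ∑ w ∈ s, (Op w) h with hg
    by_cases hg0 : g = 0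
    · rw [hg0]
      simpa using Finset.sum_nonneg fun w _ => u_nonneg w h
    have hgn : ‖g‖ ≠ 0 := norm_ne_zero_iff.mpr hg0
    have hgpos : 0 < ‖g‖ ^ 2 := by positivity
    have h1 : ‖g‖ ^ 2 = ∑ w ∈ s, (inner ℂ ((Op w) h) g : ℂ).re := by
      have := inner_self_eq_norm_sq (𝕜 := ℂ) g
      simp only [RCLike.re_to_complex] at this
      rw [← this, hg, sum_inner, Complex.re_sum]
    have h2 : ∀ w : List (Fin n), (inner ℂ ((Op w) h) g : ℂ).re
        ≤ ‖Δ ((ContinuousLinearMap.adjoint (wordOp T w)) h)‖ *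
          ‖Δ ((ContinuousLinearMap.adjoint (wordOp T w)) g)‖ := by
      intro w
      rw [inner_Op]
      calc (inner ℂ (Δ ((ContinuousLinearMap.adjoint (wordOp T w)) h))
            (Δ ((ContinuousLinearMap.adjoint (wordOp T w)) g)) : ℂ).re
          ≤ ‖(inner ℂ (Δ ((ContinuousLinearMap.adjoint (wordOp T w)) h))
            (Δ ((ContinuousLinearMap.adjoint (wordOp T w)) g)) : ℂ)‖ :=
            Complex.re_le_norm _
        _ ≤ _ := norm_inner_le_norm _ _
    have h3 : ‖g‖ ^ 2 ≤ ∑ w ∈ s,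
        ‖Δ ((ContinuousLinearMap.adjoint (wordOp T w)) h)‖ *
          ‖Δ ((ContinuousLinearMap.adjoint (wordOp T w)) g)‖ := by
      rw [h1]; exact Finset.sum_le_sum fun w _ => h2 w
    have h4 : (∑ w ∈ s,
        ‖Δ ((ContinuousLinearMap.adjoint (wordOp T w)) h)‖ *
          ‖Δ ((ContinuousLinearMap.adjoint (wordOp T w)) g)‖) ^ 2
        ≤ (∑ w ∈ s, u w h) * (∑ w ∈ s, u w g) := by
      have := Finset.sum_mul_sq_le_sq_mul_sq s
        (fun w => ‖Δ ((ContinuousLinearMap.adjoint (wordOp T w)) h)‖)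
        (fun w => ‖Δ ((ContinuousLinearMap.adjoint (wordOp T w)) g)‖)
      simpa [hu] using this
    have h5 : (∑ w ∈ s, u w g) ≤ ‖g‖ ^ 2 := sum_u_le g s
    -- combine: ‖g‖⁴ ≤ (∑ u h) ‖g‖²
    have h6 : (‖g‖ ^ 2) ^ 2 ≤ (∑ w ∈ s, u w h) * ‖g‖ ^ 2 := by
      calc (‖g‖ ^ 2) ^ 2
          ≤ (∑ w ∈ s,
            ‖Δ ((ContinuousLinearMap.adjoint (wordOp T w)) h)‖ *
              ‖Δ ((ContinuousLinearMap.adjoint (wordOp T w)) g)‖) ^ 2 := by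
            apply pow_le_pow_left₀ (by positivity) h3
        _ ≤ (∑ w ∈ s, u w h) * (∑ w ∈ s, u w g) := h4
        _ ≤ (∑ w ∈ s, u w h) * ‖g‖ ^ 2 := by
            apply mul_le_mul_of_nonneg_left h5
            exact Finset.sum_nonneg fun w _ => u_nonneg w h
    have h7 : ‖g‖ ^ 2 * ‖g‖ ^ 2 ≤ (∑ w ∈ s, u w h) * ‖g‖ ^ 2 := by
      calc ‖g‖ ^ 2 * ‖g‖ ^ 2 = (‖g‖ ^ 2) ^ 2 := by ring
        _ ≤ _ := h6
    exact le_of_mul_le_mul_right h7 hgpos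
  -- summability of the vector sum
  have hv_summable : Summable (fun w => (Op w) h) := by
    rw [summable_iff_vanishing_norm]
    intro ε hε
    obtain ⟨s, hs⟩ := summable_iff_vanishing_norm.mp hu_summable (ε ^ 2)
      (by positivity)
    refine ⟨s, fun t ht => ?_⟩
    have h1 := norm_sum_le t
    have h2 := hs t ht
    have h3 : ∑ w ∈ t, u w h < ε ^ 2 :=
      lt_of_le_of_lt (le_abs_self _) (by simpa [Real.norm_eq_abs] using h2)
    exact lt_of_pow_lt_pow_left₀ 2 hε.le (lt_of_le_of_lt h1 h3)
  obtain ⟨S, hS⟩ := hv_summable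
  -- identify the limit
  have hmono : Monotone (wordsLt n) := by
    intro a b hab
    intro w hw
    exact mem_wordsLt.mpr (lt_of_lt_of_le (mem_wordsLt.mp hw) hab)
  have hexh : ∀ w : List (Fin n), ∃ k, w ∈ wordsLt n k := fun w =>
    ⟨w.length + 1, mem_wordsLt.mpr (Nat.lt_succ_self _)⟩
  have htendF : Filter.Tendsto (wordsLt n) Filter.atTop Filter.atTop :=
    Filter.tendsto_atTop_finset_of_monotone hmono hexh
  have h1 : Filter.Tendsto (fun k => ∑ w ∈ wordsLt n k, (Op w) h)
      Filter.atTop (nhds S) := hS.comp htendF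
  have h2 : Filter.Tendsto (fun k => ∑ w ∈ wordsLt n k, (Op w) h)
      Filter.atTop (nhds h) := by
    have h2' : Filter.Tendsto (fun k : ℕ => h - Q k h)
        Filter.atTop (nhds h) := by
      have h3 := (tendsto_const_nhds (x := h) (f := Filter.atTop (α := ℕ))).sub
        (hC0 h)
      rw [sub_zero] at h3
      exact h3
    exact h2'.congr fun k => (sum_wordsLt_eq k h).symm
  have hSh : S = h := tendsto_nhds_unique h1 h2
  rw [hSh] at hS
  exact hS
end

section
/- The Poisson kernel K : H → F² ⊗ H associated to a C_0-contraction [T_1,…,T_n], defined by Kh = Σ_{α∈F_n^+} e_α ⊗ Δ T_α* h, is an isometry. -/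
theorem wordOp_append_single {n : ℕ} {H : Type} [NormedAddCommGroup H]
    [InnerProductSpace ℂ H] (T : Fin n → H →L[ℂ] H) (w : List (Fin n)) (i : Fin n) :
    wordOp T (w ++ [i]) = wordOp T w * T i := by
  simp [wordOp]

/-- The Poisson kernel `K h = ∑_α e_α ⊗ Δ T_α* h` of a
`C₀`-contraction is an isometry; in terms of its components this says that
for every `h`, the family `‖Δ T_α* h‖²` (indexed by words `α`) sums to `‖h‖²`. -/
theorem poissonKernel_isometry
    (n : ℕ) {H : Type} [NormedAddCommGroup H] [InnerProductSpace ℂ H]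
    [CompleteSpace H] (T : Fin n → H →L[ℂ] H)
    (hrow : ((1 : H →L[ℂ] H) -
        ∑ i, T i * ContinuousLinearMap.adjoint (T i)).IsPositive)
    (hC0 : ∀ h : H,
      Filter.Tendsto
        (fun k : ℕ =>
          (∑ f : Fin k → Fin n,
            wordOp T (List.ofFn f) *
              ContinuousLinearMap.adjoint (wordOp T (List.ofFn f))) h)
        Filter.atTop (nhds 0))
    (Δ : H →L[ℂ] H) (hΔsa : IsSelfAdjoint Δ) (hΔpos : Δ.IsPositive)
    (hΔ2 : Δ * Δ =
      (1 : H →L[ℂ] H) - ∑ i, T i * ContinuousLinearMap.adjoint (T i)) :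
    ∀ h : H,
      HasSum
        (fun w : List (Fin n) =>
          ‖Δ (ContinuousLinearMap.adjoint (wordOp T w) h)‖ ^ 2)
        (‖h‖ ^ 2) := by
  intro h
  set A : List (Fin n) → H →L[ℂ] H := fun w => ContinuousLinearMap.adjoint (wordOp T w) with hA
  -- the key pointwise identity
  have key : ∀ x : H, ‖Δ x‖ ^ 2 = ‖x‖ ^ 2 - ∑ i, ‖ContinuousLinearMap.adjoint (T i) x‖ ^ 2 := by
    intro x
    have h1 : (inner ℂ ((Δ * Δ) x) x : ℂ) = inner ℂ (Δ x) (Δ x) := by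
      have : (inner ℂ ((Δ * Δ) x) x : ℂ) = inner ℂ (ContinuousLinearMap.adjoint Δ (Δ x)) x := by
        rw [hΔsa.adjoint_eq]; rfl
      rw [this, ContinuousLinearMap.adjoint_inner_left]
    have h2 : (inner ℂ ((Δ * Δ) x) x : ℂ)
        = inner ℂ x x - ∑ i, inner ℂ (ContinuousLinearMap.adjoint (T i) x)
            (ContinuousLinearMap.adjoint (T i) x) := by
      rw [hΔ2]
      simp only [ContinuousLinearMap.sub_apply, ContinuousLinearMap.one_apply,
        ContinuousLinearMap.sum_apply, inner_sub_left, sum_inner]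
      congr 1
      refine Finset.sum_congr rfl fun i _ => ?_
      rw [ContinuousLinearMap.mul_apply]
      exact
        (ContinuousLinearMap.adjoint_inner_right (T i)
          (ContinuousLinearMap.adjoint (T i) x) x).symm
    have h3 := congrArg (RCLike.re (K := ℂ)) (h1.symm.trans h2)
    simpa [map_sub, map_sum, inner_self_eq_norm_sq (𝕜 := ℂ), ← Complex.ofReal_pow, Complex.ofReal_re] using h3
  -- partial length-level sums
  set r : ℕ → ℝ := fun k => ∑ f : Fin k → Fin n, ‖A (List.ofFn f) h‖ ^ 2 with hr
  set s : ℕ → ℝ := fun k => ∑ f : Fin k → Fin n, ‖Δ (A (List.ofFn f) h)‖ ^ 2 with hs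
  have hAsnoc : ∀ (k : ℕ) (f : Fin k → Fin n) (i : Fin n),
      A (List.ofFn (Fin.snoc f i)) h
        = ContinuousLinearMap.adjoint (T i) (A (List.ofFn f) h) := by
    intro k f i
    have h4 : List.ofFn (Fin.snoc f i) = List.ofFn f ++ [i] := by
      rw [List.ofFn_succ']
      simp [List.concat_eq_append]
    rw [hA]
    simp only [h4, wordOp_append_single]
    have h5 : ContinuousLinearMap.adjoint (wordOp T (List.ofFn f) * T i)
        = ContinuousLinearMap.adjoint (T i) * ContinuousLinearMap.adjoint (wordOp T (List.ofFn f)) :=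
      ContinuousLinearMap.adjoint_comp _ _
    rw [h5]
    rfl
  have hstep : ∀ k : ℕ, s k = r k - r (k + 1) := by
    intro k
    have hsucc : r (k + 1)
        = ∑ p : Fin n × (Fin k → Fin n), ‖A (List.ofFn (Fin.snoc p.2 p.1)) h‖ ^ 2 := by
      simp only [hr]
      exact (Fintype.sum_equiv (Fin.snocEquiv (fun _ => Fin n)) _ _ (fun p => rfl)).symm
    rw [hs, hsucc]
    simp only [Fintype.sum_prod_type]
    rw [Finset.sum_comm]
    simp only [hr]
    rw [← Finset.sum_sub_distrib]
    refine Finset.sum_congr rfl fun f _ => ?_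
    rw [key]
    congr 1
    exact Finset.sum_congr rfl fun i _ => by rw [hAsnoc]
  -- r 0 = ‖h‖²
  have hA1 : A ([] : List (Fin n)) = 1 := by
    have hw : wordOp T ([] : List (Fin n)) = 1 := by simp [wordOp]
    rw [hA]
    simp only [hw]
    exact ContinuousLinearMap.adjoint_id
  have hr0 : r 0 = ‖h‖ ^ 2 := by
    simp only [hr]
    rw [Fintype.sum_subsingleton _ (fun i : Fin 0 => i.elim0)]
    have h14 : List.ofFn (fun i : Fin 0 => i.elim0) = ([] : List (Fin n)) := List.ofFn_zero
    rw [h14, hA1]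
    rfl
  -- r k equals ⟪h, Q k h⟫ and tends to 0
  have hrinner : ∀ k : ℕ, (r k : ℝ)
      = RCLike.re (K := ℂ) (inner ℂ h ((∑ f : Fin k → Fin n,
          wordOp T (List.ofFn f) * ContinuousLinearMap.adjoint (wordOp T (List.ofFn f))) h)) := by
    intro k
    simp only [hr, ContinuousLinearMap.sum_apply, inner_sum, map_sum]
    refine Finset.sum_congr rfl fun f _ => ?_
    have e1 : (inner ℂ h ((wordOp T (List.ofFn f) *
          ContinuousLinearMap.adjoint (wordOp T (List.ofFn f))) h) : ℂ)
        = inner ℂ (A (List.ofFn f) h) (A (List.ofFn f) h) := by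
      rw [ContinuousLinearMap.mul_apply, hA]
      exact (ContinuousLinearMap.adjoint_inner_left _ _ _).symm
    rw [e1, inner_self_eq_norm_sq (𝕜 := ℂ)]
  have hrtend : Filter.Tendsto r Filter.atTop (nhds 0) := by
    have h6 : Filter.Tendsto (fun k : ℕ => (inner ℂ h ((∑ f : Fin k → Fin n,
        wordOp T (List.ofFn f) * ContinuousLinearMap.adjoint (wordOp T (List.ofFn f))) h) : ℂ))
        Filter.atTop (nhds (inner ℂ h (0 : H))) :=
      Filter.Tendsto.inner tendsto_const_nhds (hC0 h)
    have h7 := (RCLike.continuous_re (K := ℂ)).continuousAt.tendsto.comp h6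
    simp only [inner_zero_right, map_zero] at h7
    have h8 : r = fun k => RCLike.re (K := ℂ) (inner ℂ h ((∑ f : Fin k → Fin n,
        wordOp T (List.ofFn f) * ContinuousLinearMap.adjoint (wordOp T (List.ofFn f))) h)) :=
      funext hrinner
    rw [h8]
    exact h7
  -- HasSum over lengths
  have hsnonneg : ∀ k, 0 ≤ s k := fun k =>
    Finset.sum_nonneg fun f _ => sq_nonneg _
  have hsum_s : HasSum s (‖h‖ ^ 2) := by
    rw [hasSum_iff_tendsto_nat_of_nonneg hsnonneg]
    have h9 : ∀ N : ℕ, ∑ k ∈ Finset.range N, s k = r 0 - r N := by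
      intro N
      rw [← Finset.sum_range_sub' r N]
      exact Finset.sum_congr rfl fun k _ => hstep k
    simp only [h9, hr0]
    have := tendsto_const_nhds (x := ‖h‖ ^ 2) (f := Filter.atTop (α := ℕ)) |>.sub hrtend
    simpa using this
  -- HasSum over the sigma type
  set G : (Σ k : ℕ, Fin k → Fin n) → ℝ :=
    fun p => ‖Δ (A (List.ofFn p.2) h)‖ ^ 2 with hG
  have hGnonneg : ∀ p, 0 ≤ G p := fun p => sq_nonneg _
  have hGsummable : Summable G := by
    rw [summable_sigma_of_nonneg hGnonneg]
    constructor
    · intro k; exact (hasSum_fintype _).summable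
    · have : (fun k : ℕ => ∑' f : Fin k → Fin n, G ⟨k, f⟩) = s := by
        funext k; rw [tsum_fintype]
      rw [this]
      exact hsum_s.summable
  have hGsum : HasSum G (‖h‖ ^ 2) := by
    have h10 := hGsummable.hasSum
    have h11 : HasSum s (∑' p, G p) := by
      refine h10.sigma fun k => ?_
      exact hasSum_fintype _
    rwa [h11.unique hsum_s] at h10
  -- transfer along the list/sigma equivalence
  have h12 := (Equiv.hasSum_iff (f := fun w : List (Fin n) => ‖Δ (A w h)‖ ^ 2)
    (a := ‖h‖ ^ 2) List.equivSigmaTuple.symm).mp ?_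
  · exact h12
  · have h13 : (fun w : List (Fin n) => ‖Δ (A w h)‖ ^ 2) ∘ List.equivSigmaTuple.symm = G := by
      funext p
      simp [List.equivSigmaTuple, hG]
    rw [h13]
    exact hGsum
end

section
/- If N_1 and N_2 are closed subspaces of H invariant under every operator of a semigroup Σ ⊆ B(H), and N_2 ⊆ N_1, then N = N_1 ⊖ N_2 is semi-invariant under Σ: for all T_1, T_2 ∈ Σ, P_N T_1 P_N T_2 P_N = P_N T_1 T_2 P_N. -/
/-- If `N₁, N₂` are closed subspaces invariant under every member
of a multiplicative semigroup `Σ ⊆ B(H)` and `N₂ ⊆ N₁`, then `N = N₁ ⊖ N₂`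
is semi-invariant under `Σ`: `P_N T₁ P_N T₂ P_N = P_N T₁ T₂ P_N`
for all `T₁, T₂ ∈ Σ` (here `P_N` is the orthogonal projection onto `N`,
viewed as an operator `H →L[ℂ] H`). -/
theorem semiInvariant_of_nested_invariant
    {H : Type} [NormedAddCommGroup H] [InnerProductSpace ℂ H] [CompleteSpace H]
    (Sg : Set (H →L[ℂ] H))
    (hmul : ∀ A ∈ Sg, ∀ B ∈ Sg, A * B ∈ Sg)
    (N₁ N₂ : Submodule ℂ H) [CompleteSpace N₁] [CompleteSpace N₂]
    [CompleteSpace ↥(N₁ ⊓ N₂ᗮ)]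
    (hN₁ : ∀ A ∈ Sg, ∀ x ∈ N₁, A x ∈ N₁)
    (hN₂ : ∀ A ∈ Sg, ∀ x ∈ N₂, A x ∈ N₂)
    (h21 : N₂ ≤ N₁) :
    ∀ A ∈ Sg, ∀ B ∈ Sg,
      ((N₁ ⊓ N₂ᗮ).subtypeL.comp (Submodule.orthogonalProjectionOnto (N₁ ⊓ N₂ᗮ))) * A *
          ((N₁ ⊓ N₂ᗮ).subtypeL.comp (Submodule.orthogonalProjectionOnto (N₁ ⊓ N₂ᗮ))) * B *
          ((N₁ ⊓ N₂ᗮ).subtypeL.comp (Submodule.orthogonalProjectionOnto (N₁ ⊓ N₂ᗮ))) =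
        ((N₁ ⊓ N₂ᗮ).subtypeL.comp (Submodule.orthogonalProjectionOnto (N₁ ⊓ N₂ᗮ))) *
          (A * B) *
          ((N₁ ⊓ N₂ᗮ).subtypeL.comp (Submodule.orthogonalProjectionOnto (N₁ ⊓ N₂ᗮ))) := by
  intro A hA B hB
  set K : Submodule ℂ H := N₁ ⊓ N₂ᗮ with hK
  set P : H →L[ℂ] H := K.subtypeL.comp (Submodule.orthogonalProjectionOnto K) with hP
  -- N₂ ≤ Kᗮ
  have hN2K : N₂ ≤ Kᗮ := by
    refine le_trans (Submodule.le_orthogonal_orthogonal N₂) ?_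
    exact Submodule.orthogonal_le inf_le_right
  -- P vanishes on Kᗮ
  have hPzero : ∀ w ∈ Kᗮ, P w = 0 := by
    intro w hw
    simp [hP, Submodule.orthogonalProjectionOnto_apply_of_mem_orthogonal hw]
  -- P fixes K
  have hPfix : ∀ v ∈ K, P v = v := by
    intro v hv
    simp [hP, Submodule.starProjection_eq_self_iff.mpr hv]
  -- key: for v ∈ N₁, v - P v ∈ N₂
  have hkey : ∀ v ∈ N₁, v - P v ∈ N₂ := by
    intro v hv
    have hw : (Submodule.orthogonalProjectionOnto N₂ v : H) ∈ N₂ := (Submodule.orthogonalProjectionOnto N₂ v).2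
    set w : H := (Submodule.orthogonalProjectionOnto N₂ v : H) with hwdef
    have hvw : v - w ∈ K := by
      refine Submodule.mem_inf.mpr ⟨?_, ?_⟩
      · exact Submodule.sub_mem _ hv (h21 hw)
      · exact Submodule.sub_starProjection_mem_orthogonal v
    have : P v = (v - w) + P w := by
      have := map_sub P v w
      rw [hPfix _ hvw] at this
      linear_combination (norm := module) -this
    rw [this, hPzero w (hN2K hw), add_zero]
    simpa using hw
  ext x
  simp only [ContinuousLinearMap.mul_apply, ContinuousLinearMap.coe_mul, Function.comp_apply]
  set y : H := P x with hy
  have hyK : y ∈ K := by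
    rw [hy, hP]; exact (Submodule.orthogonalProjectionOnto K x).2
  have hyN1 : y ∈ N₁ := hyK.1
  have hBy : B y ∈ N₁ := hN₁ B hB y hyN1
  have hdiff : B y - P (B y) ∈ N₂ := hkey _ hBy
  have hAdiff : A (B y) - A (P (B y)) ∈ Kᗮ := by
    have : A (B y - P (B y)) ∈ N₂ := hN₂ A hA _ hdiff
    rw [map_sub] at this
    exact hN2K this
  have := hPzero _ hAdiff
  rw [map_sub] at this
  have h0 : P (A (B y)) = P (A (P (B y))) := by
    linear_combination (norm := module) this
  exact h0.symm
end

section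
/- Let N = span{z_{λ_1},…,z_{λ_k}} for distinct λ_1,…,λ_k ∈ 𝔹_n, let W_1,…,W_k ∈ B(K) for a Hilbert space K, and define T* on N ⊗ K by T*(z_{λ_j} ⊗ h) = z_{λ_j} ⊗ W_j* h. Then ‖T‖ ≤ 1 if and only if the k×k operator matrix [ (I_K − W_j W_i*) / (1 − ⟨λ_j, λ_i⟩) ]_{i,j} is positive semidefinite. -/
/-- Let `N = span{z_{λ_1},…,z_{λ_k}}` for distinct points
`λ_1,…,λ_k` of the open unit ball of `ℂⁿ`, let `W₁,…,W_k ∈ B(K)`, and let `T`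
be the operator on `N ⊗ K` with `T*(z_{λ_j} ⊗ h) = z_{λ_j} ⊗ W_j* h`.
Then `‖T‖ ≤ 1` iff the operator matrix
`[(I_K − W_j W_i*)/(1 − ⟨λ_j, λ_i⟩)]` is positive semidefinite.

Here `N ⊗ K` is modelled by a Hilbert space `E` together with maps
`ξ j : K →L[ℂ] E`, `ξ j h = z_{λ_j} ⊗ h`, whose inner products are the ones
of elementary tensors (using `⟪z_{λ_i}, z_{λ_j}⟫ = (1 − ⟨λ_i, λ_j⟩)⁻¹`, with
Mathlib's convention that the inner product is conjugate-linear in the first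
variable), and whose ranges span a dense subspace. Positive semidefiniteness
of the operator matrix is expressed by its quadratic form on `⊕₁ᵏ K` being a
nonnegative real number. -/
theorem nevanlinnaPick_norm_le_one_iff_posdef
    (n k : ℕ)
    {K : Type} [NormedAddCommGroup K] [InnerProductSpace ℂ K] [CompleteSpace K]
    {E : Type} [NormedAddCommGroup E] [InnerProductSpace ℂ E] [CompleteSpace E]
    (lam : Fin k → Fin n → ℂ)
    (hball : ∀ j, ∑ i, ‖lam j i‖ ^ 2 < 1)
    (hdist : Function.Injective lam)
    (W : Fin k → K →L[ℂ] K)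
    (ξ : Fin k → K →L[ℂ] E)
    (hinner : ∀ (i j : Fin k) (h g : K),
      (inner ℂ (ξ i h) (ξ j g) : ℂ) =
        (1 - ∑ q, lam i q * (starRingEnd ℂ) (lam j q))⁻¹ * (inner ℂ h g : ℂ))
    (hspan :
      (Submodule.span ℂ (⋃ j, Set.range (ξ j))).topologicalClosure = ⊤)
    (T : E →L[ℂ] E)
    (hT : ∀ (j : Fin k) (h : K),
      ContinuousLinearMap.adjoint T (ξ j h) =
        ξ j (ContinuousLinearMap.adjoint (W j) h)) :
    ‖T‖ ≤ 1 ↔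
      ∀ h : Fin k → K, ∃ r : ℝ, 0 ≤ r ∧
        (∑ i, ∑ j,
          (1 - ∑ q, lam i q * (starRingEnd ℂ) (lam j q))⁻¹ *
            (inner ℂ (h i)
              (h j - W i (ContinuousLinearMap.adjoint (W j) (h j))) : ℂ)) =
          (r : ℂ) := by

  classical
  set A := ContinuousLinearMap.adjoint T with hA
  have hnormA : ‖A‖ = ‖T‖ := by
    rw [hA]
    exact ContinuousLinearMap.adjoint.norm_map T
  -- every element of the span is a sum of the form `∑ j, ξ j (h j)`
  have hrep : ∀ x ∈ Submodule.span ℂ (⋃ j, Set.range (ξ j)),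
      ∃ h : Fin k → K, x = ∑ j, ξ j (h j) := by
    intro x hx
    induction hx using Submodule.span_induction with
    | mem x hx =>
        obtain ⟨j, v, rfl⟩ : ∃ j v, ξ j v = x := by
          simpa [Set.mem_iUnion, eq_comm] using hx
        refine ⟨fun i => if i = j then v else 0, ?_⟩
        rw [Finset.sum_eq_single j]
        · simp
        · intro i _ hij; simp [hij]
        · simp
    | zero => exact ⟨0, by simp⟩
    | add x y _ _ hx hy =>
        obtain ⟨h1, rfl⟩ := hx; obtain ⟨h2, rfl⟩ := hy
        exact ⟨h1 + h2, by simp [Finset.sum_add_distrib]⟩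
    | smul c x _ hx =>
        obtain ⟨h1, rfl⟩ := hx
        exact ⟨c • h1, by simp [Finset.smul_sum]⟩
  -- the key identity
  have key : ∀ h : Fin k → K,
      (∑ i, ∑ j,
        (1 - ∑ q, lam i q * (starRingEnd ℂ) (lam j q))⁻¹ *
          (inner ℂ (h i)
            (h j - W i (ContinuousLinearMap.adjoint (W j) (h j))) : ℂ)) =
      ((‖∑ j, ξ j (h j)‖ ^ 2 - ‖A (∑ j, ξ j (h j))‖ ^ 2 : ℝ) : ℂ) := by
    intro h
    have hAx : A (∑ j, ξ j (h j))
        = ∑ j, ξ j (ContinuousLinearMap.adjoint (W j) (h j)) := by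
      rw [map_sum]
      exact Finset.sum_congr rfl fun j _ => hT j (h j)
    have hx2 : ((‖∑ j, ξ j (h j)‖ ^ 2 : ℝ) : ℂ)
        = ∑ i, ∑ j, (inner ℂ (ξ i (h i)) (ξ j (h j)) : ℂ) := by
      rw [show ((‖∑ j, ξ j (h j)‖ ^ 2 : ℝ) : ℂ)
          = (inner ℂ (∑ j, ξ j (h j)) (∑ j, ξ j (h j)) : ℂ) by
        rw [inner_self_eq_norm_sq_to_K]; norm_cast]
      rw [sum_inner]
      exact Finset.sum_congr rfl fun i _ => inner_sum _ _ _
    have hAx2 : ((‖A (∑ j, ξ j (h j))‖ ^ 2 : ℝ) : ℂ)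
        = ∑ i, ∑ j, (inner ℂ (ξ i (ContinuousLinearMap.adjoint (W i) (h i)))
            (ξ j (ContinuousLinearMap.adjoint (W j) (h j))) : ℂ) := by
      rw [show ((‖A (∑ j, ξ j (h j))‖ ^ 2 : ℝ) : ℂ)
          = (inner ℂ (A (∑ j, ξ j (h j))) (A (∑ j, ξ j (h j))) : ℂ) by
        rw [inner_self_eq_norm_sq_to_K]; norm_cast]
      rw [hAx, sum_inner]
      exact Finset.sum_congr rfl fun i _ => inner_sum _ _ _
    rw [Complex.ofReal_sub, hx2, hAx2, ← Finset.sum_sub_distrib]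
    refine Finset.sum_congr rfl fun i _ => ?_
    rw [← Finset.sum_sub_distrib]
    refine Finset.sum_congr rfl fun j _ => ?_
    rw [hinner, hinner, inner_sub_right, mul_sub]
    congr 2
    rw [ContinuousLinearMap.adjoint_inner_left]
  constructor
  · -- forward direction
    intro hTnorm h
    refine ⟨‖∑ j, ξ j (h j)‖ ^ 2 - ‖A (∑ j, ξ j (h j))‖ ^ 2, ?_, key h⟩
    have h1 : ‖A (∑ j, ξ j (h j))‖ ≤ ‖∑ j, ξ j (h j)‖ := by
      calc ‖A (∑ j, ξ j (h j))‖ ≤ ‖A‖ * ‖∑ j, ξ j (h j)‖ :=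
            A.le_opNorm _
        _ ≤ 1 * ‖∑ j, ξ j (h j)‖ := by
            apply mul_le_mul_of_nonneg_right _ (norm_nonneg _)
            rw [hnormA]; exact hTnorm
        _ = ‖∑ j, ξ j (h j)‖ := one_mul _
    nlinarith [norm_nonneg (A (∑ j, ξ j (h j)))]
  · -- backward direction
    intro hpos
    rw [← hnormA]
    refine ContinuousLinearMap.opNorm_le_bound A zero_le_one fun x => ?_
    rw [one_mul]
    have hclosed : IsClosed {x : E | ‖A x‖ ≤ ‖x‖} :=
      isClosed_le (continuous_norm.comp A.continuous) continuous_norm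
    have hsub : (↑(Submodule.span ℂ (⋃ j, Set.range (ξ j))) : Set E)
        ⊆ {x : E | ‖A x‖ ≤ ‖x‖} := by
      intro x hx
      obtain ⟨h, rfl⟩ := hrep x hx
      obtain ⟨r, hr0, hr⟩ := hpos h
      rw [key h] at hr
      have hr' : ‖∑ j, ξ j (h j)‖ ^ 2 - ‖A (∑ j, ξ j (h j))‖ ^ 2 = r := by
        exact_mod_cast hr
      have h2 : ‖A (∑ j, ξ j (h j))‖ ^ 2 ≤ ‖∑ j, ξ j (h j)‖ ^ 2 := by linarith
      simp only [Set.mem_setOf_eq]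
      nlinarith [norm_nonneg (A (∑ j, ξ j (h j))), norm_nonneg (∑ j, ξ j (h j))]
    have hdense : Dense (↑(Submodule.span ℂ (⋃ j, Set.range (ξ j))) : Set E) :=
      Submodule.dense_iff_topologicalClosure_eq_top.mpr hspan
    have : {x : E | ‖A x‖ ≤ ‖x‖} = Set.univ := by
      apply Set.eq_univ_of_univ_subset
      calc Set.univ = closure (↑(Submodule.span ℂ (⋃ j, Set.range (ξ j))) : Set E) :=
            hdense.closure_eq.symm
        _ ⊆ closure {x : E | ‖A x‖ ≤ ‖x‖} := closure_mono hsub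
        _ = {x : E | ‖A x‖ ≤ ‖x‖} := hclosed.closure_eq
    exact (Set.eq_univ_iff_forall.mp this x)
end
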